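/- Consider a hamiltonian hierarchy whose hamiltonian operator satisfies K^{αβ} = η^{αβ}∂_x + O(ε) for a constant symmetric nondegenerate matrix η, equipped with a tau-structure h_{β,q}, q ≥ −1, in normal coordinates, i.e. h_{α,−1} = η_{αμ}u^μ, and normalized so that h_{β,q}|_{u^*_*=0} = 0. Then for every p ≥ 0 one has ∂_x h_{α,p−1} = η_{1μ} K^{μν} δh̄_{α,p}/δu^ν, and consequently the tau-symmetric densities h_{β,q} are uniquely determined by the Hamiltonians h̄_{α,p} and the hamiltonian operator K. -/

import Mathlib

/-!
Common formal framework for the theory of differential polynomials, local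
functionals and tau-structures, following Buryak–Dubrovin–Guéré–Rossi.

Variables of the algebra of differential polynomials: `Sum.inl (α, i)` stands
for `u^α_i` (with `u^α = u^α_0`) and `Sum.inr ()` stands for `ε`.  The paper's
index `1` (the unit direction) corresponds to `(0 : Fin N)` here.
-/

/-- The variables of the algebra of differential polynomials. -/
abbrev DVar (N : ℕ) : Type := (Fin N × ℕ) ⊕ Unit

/-- The ring `Â_N` of (extended) differential polynomials, realized inside the
ring of formal power series in the variables `u^α_i` and `ε`. -/
abbrev DP (N : ℕ) : Type := MvPowerSeries (DVar N) ℂ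

namespace DP

variable {N : ℕ}

/-- Coefficient of a monomial. -/
noncomputable def co (f : DP N) (m : DVar N →₀ ℕ) : ℂ :=
  MvPowerSeries.coeff m f

/-- Build a power series from its coefficients. -/
def ofCo (F : (DVar N →₀ ℕ) → ℂ) : DP N := F

/-- The variable `u^α_i`. -/
noncomputable def uv (α : Fin N) (i : ℕ) : DP N :=
  MvPowerSeries.X (Sum.inl (α, i))

/-- The variable `ε`. -/
noncomputable def eps : DP N := MvPowerSeries.X (Sum.inr ())

/-- The partial derivative `∂/∂v` with respect to one of the variables. -/
noncomputable def pd (v : DVar N) (f : DP N) : DP N :=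
  ofCo fun m => ((m v : ℂ) + 1) * co f (m + Finsupp.single v 1)

/-- The spatial derivative `∂_x = Σ_{α,i} u^α_{i+1} ∂/∂u^α_i`. -/
noncomputable def dx (f : DP N) : DP N :=
  ofCo fun m =>
    ∑ v ∈ m.support,
      (match v with
        | Sum.inl (α, i + 1) =>
            co (pd (Sum.inl (α, i)) f) (m - Finsupp.single (Sum.inl (α, i + 1)) 1)
        | _ => (0 : ℂ))

/-- The variational derivative `δ/δu^μ = Σ_{i≥0} (−∂_x)^i ∘ ∂/∂u^μ_i`. -/
noncomputable def vd (μ : Fin N) (f : DP N) : DP N :=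
  ofCo fun m => ∑ᶠ i : ℕ, ((-1 : ℂ) ^ i) * co (dx^[i] (pd (Sum.inl (μ, i)) f)) m

/-- The weighted degree of a monomial: `deg u^α_i = i`, `deg ε = −1`. -/
noncomputable def wdeg (m : DVar N →₀ ℕ) : ℤ :=
  ∑ v ∈ m.support,
    (match v with
      | Sum.inl (_, i) => (i : ℤ)
      | Sum.inr _ => (-1 : ℤ)) * (m v : ℤ)

/-- Degree-`k` homogeneity (membership in `Â_N^{[k]}`). -/
def IsHomog (k : ℤ) (f : DP N) : Prop :=
  ∀ m, co f m ≠ 0 → wdeg m = k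

/-- Being a constant, i.e. an element of `ℂ[[ε]]`. -/
def IsConst (f : DP N) : Prop :=
  ∀ m, co f m ≠ 0 → ∀ v ∈ m.support, v = Sum.inr ()

/-- Vanishing of the evaluation at `u^*_* = 0`. -/
def VanishAtU0 (f : DP N) : Prop :=
  ∀ k : ℕ, co f (Finsupp.single (Sum.inr ()) k) = 0

/-- Being a genuine differential polynomial: in each ε-degree at most `e`,
polynomiality (bounded degree, boundedly many variables) in the jet
variables `u^α_i`, `i ≥ 1`. -/
def IsDiffPoly (f : DP N) : Prop :=
  ∀ e : ℕ, ∃ D : ℕ, ∀ m, co f m ≠ 0 → m (Sum.inr ()) ≤ e →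
    ((∑ v ∈ m.support,
        (match v with
          | Sum.inl (_, _ + 1) => m v
          | _ => 0)) ≤ D) ∧
      ∀ (α : Fin N) (i : ℕ), D < i → m (Sum.inl (α, i)) = 0

/-- The submodule of constants `ℂ[[ε]] ⊆ Â_N`. -/
noncomputable def constSub (N : ℕ) : Submodule ℂ (DP N) where
  carrier := {f | IsConst f}
  add_mem' := by
    intro f g hf hg m hm
    have hco : co (f + g) m = co f m + co g m := map_add _ _ _
    by_cases h1 : co f m = 0
    · have h2 : co g m ≠ 0 := by
        intro h2; exact hm (by rw [hco, h1, h2, add_zero])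
      exact hg m h2
    · exact hf m h1
  zero_mem' := by
    intro m hm
    exact (hm (map_zero (MvPowerSeries.coeff (R := ℂ) m))).elim
  smul_mem' := by
    intro c f hf m hm
    have hne : co f m ≠ 0 := by
      intro h
      apply hm
      have hsm : co (c • f) m = c * co f m := by
        simp [co]
      rw [hsm, h, mul_zero]
    exact hf m hne

/-- The submodule `ℂ[[ε]] + ∂_x(Â_N)` by which one quotients to get local
functionals. -/
noncomputable def lfSub (N : ℕ) : Submodule ℂ (DP N) :=
  constSub N ⊔ Submodule.span ℂ (Set.range (dx : DP N → DP N))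

/-- The space `Λ̂_N` of local functionals. -/
abbrev LF (N : ℕ) := DP N ⧸ lfSub N

/-- The projection `f ↦ ∫ f dx`. -/
noncomputable def intg : DP N →ₗ[ℂ] LF N := (lfSub N).mkQ

/-- A choice of density for a local functional. -/
noncomputable def rep (h : LF N) : DP N :=
  (Submodule.Quotient.mk_surjective (lfSub N) h).choose

/-- The variational derivative `δ/δu^μ` of a local functional. -/
noncomputable def vdQ (μ : Fin N) (h : LF N) : DP N := vd μ (rep h)

/-- The partial derivative `∂/∂v` of a local functional. -/
noncomputable def pdQ (v : DVar N) (h : LF N) : LF N := intg (pd v (rep h))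

/-- The degree-`k` local functionals `Λ̂_N^{[k]}`. -/
noncomputable def LFHomog (N : ℕ) (k : ℤ) : Set (LF N) :=
  intg '' {f : DP N | IsHomog k f ∧ IsDiffPoly f}

/-- The operator `K = η ∂_x` applied to a tuple of differential polynomials. -/
noncomputable def etaAp (η : Matrix (Fin N) (Fin N) ℂ) (α : Fin N)
    (g : Fin N → DP N) : DP N :=
  ∑ ν : Fin N, η α ν • dx (g ν)

/-- The bracket `{f̄, ḡ}_{η∂_x}` of local functionals. -/
noncomputable def lfbEta (η : Matrix (Fin N) (Fin N) ℂ) (f g : LF N) : LF N :=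
  intg (∑ μ : Fin N, vdQ μ f * etaAp η μ fun ν => vdQ ν g)

/-- The bracket `{f, h̄}_{η∂_x}` of a differential polynomial with a local
functional. -/
noncomputable def pbEta (η : Matrix (Fin N) (Fin N) ℂ) (f : DP N) (h : LF N) : DP N :=
  ofCo fun m => ∑ γ : Fin N, ∑ᶠ n : ℕ,
    co (pd (Sum.inl (γ, n)) f * dx^[n] (etaAp η γ fun μ => vdQ μ h)) m

/-- A general operator `K^{γν} = Σ_j K^{γν}_j ∂_x^j` applied to a tuple of
differential polynomials. -/
noncomputable def Kap (K : Fin N → Fin N → ℕ → DP N) (γ : Fin N)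
    (g : Fin N → DP N) : DP N :=
  ∑ ν : Fin N, ofCo fun m => ∑ᶠ j : ℕ, co (K γ ν j * dx^[j] (g ν)) m

/-- The bracket `{f̄, ḡ}_K` of local functionals. -/
noncomputable def lfbK (K : Fin N → Fin N → ℕ → DP N) (f g : LF N) : LF N :=
  intg (∑ μ : Fin N, vdQ μ f * Kap K μ fun ν => vdQ ν g)

/-- The bracket `{f, h̄}_K` of a differential polynomial with a local
functional. -/
noncomputable def pbK (K : Fin N → Fin N → ℕ → DP N) (f : DP N) (h : LF N) : DP N :=
  ofCo fun m => ∑ γ : Fin N, ∑ᶠ n : ℕ,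
    co (pd (Sum.inl (γ, n)) f * dx^[n] (Kap K γ fun μ => vdQ μ h)) m

/-- Being a hamiltonian operator. -/
structure IsHamOp (K : Fin N → Fin N → ℕ → DP N) : Prop where
  finite : ∀ γ ν, ∃ J : ℕ, ∀ j, J ≤ j → K γ ν j = 0
  deg : ∀ (γ ν : Fin N) (j : ℕ), IsHomog (1 - (j : ℤ)) (K γ ν j)
  poly : ∀ γ ν j, IsDiffPoly (K γ ν j)
  antisym : ∀ f g : LF N, lfbK K f g = -lfbK K g f
  jacobi : ∀ f g h : LF N,
    lfbK K (lfbK K f g) h + lfbK K (lfbK K g h) f + lfbK K (lfbK K h f) g = 0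

/-- A hamiltonian hierarchy: a hamiltonian operator together with pairwise
commuting Hamiltonians `h̄_{β,q} ∈ Λ̂^{[0]}_N` such that `h̄_{1,0}` generates the
spatial translations. -/
structure IsHierarchy [NeZero N] (K : Fin N → Fin N → ℕ → DP N)
    (H : Fin N → ℕ → LF N) : Prop where
  ham : IsHamOp K
  mem : ∀ β q, H β q ∈ LFHomog N 0
  comm : ∀ β q γ p, lfbK K (H β q) (H γ p) = 0
  transl : ∀ α, Kap K α (fun μ => vdQ μ (H 0 0)) = uv α 1

/-- A tau-structure for a hamiltonian hierarchy.  Here `h β q` denotes the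
tau-symmetric density `h_{β,q-1}` (an index shift by one). -/
structure IsTauStructure [NeZero N] (K : Fin N → Fin N → ℕ → DP N)
    (H : Fin N → ℕ → LF N) (h : Fin N → ℕ → DP N) : Prop where
  mem : ∀ β q, IsHomog 0 (h β q) ∧ IsDiffPoly (h β q)
  casimir : ∀ β α, Kap K α (fun μ => vdQ μ (intg (h β 0))) = 0
  indep : LinearIndependent ℂ fun β : Fin N => intg (h β 0)
  nondeg : Matrix.det (Matrix.of fun α β : Fin N => co (K α β 1) 0) ≠ 0
  dens : ∀ β q, intg (h β (q + 1)) = H β q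
  tausym : ∀ α β p q, pbK K (h α p) (H β q) = pbK K (h β q) (H α p)

end DP

/-!
Translation along `x` is the flow of `h̄_{1,0}`, so `∂_x h_{α,p-1} = {h_{α,p-1}, h̄_{1,0}}_K`.
Tau-symmetry turns this into `{h_{1,-1}, h̄_{α,p}}_K`, and since `h_{1,-1} = η_{1μ}u^μ` depends
only on the `u^μ_0`, this bracket is `η_{1μ}K^{μν}δh̄_{α,p}/δu^ν`.

Uniqueness: the right-hand side does not involve the densities, so two tau-structures differ
by elements of `ker ∂_x`. That kernel consists of the series in `ε` alone, and these are
killed by the normalization at `u^*_* = 0`.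
-/

namespace DP

variable {N : ℕ}

open MvPowerSeries

@[simp] lemma co_zero (m : DVar N →₀ ℕ) : co (0 : DP N) m = 0 := map_zero (coeff m)

lemma co_sub (f g : DP N) (m : DVar N →₀ ℕ) : co (f - g) m = co f m - co g m :=
  map_sub (coeff m) f g

lemma co_mul_uv (f : DP N) (γ : Fin N) (i : ℕ) (m : DVar N →₀ ℕ) :
    co (f * uv γ i) m = if Sum.inl (γ, i) ∈ m.support then
      co f (m - Finsupp.single (Sum.inl (γ, i)) 1) else 0 := by
  simp only [uv, co, X, coeff_mul_monomial, mul_one, Finsupp.single_le_iff,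
    Nat.one_le_iff_ne_zero, Finsupp.mem_support_iff]

lemma pd_eq_pderiv (v : DVar N) (f : DP N) : pd v f = pderiv ℂ v f := by
  ext m
  rw [coeff_pderiv, mul_comm]
  rfl

lemma co_pd (v : DVar N) (f : DP N) (m : DVar N →₀ ℕ) :
    co (pd v f) m = co f (m + Finsupp.single v 1) * (m v + 1) := by
  rw [pd_eq_pderiv]; exact coeff_pderiv f m

lemma pd_uv (v : DVar N) (γ : Fin N) (i : ℕ) :
    pd v (uv γ i) = if Sum.inl (γ, i) = v then 1 else 0 := by
  classical
  rw [pd_eq_pderiv, uv, pderiv_X, Pi.single_apply]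

lemma co_dx (f : DP N) (m : DVar N →₀ ℕ) :
    co (dx f) m = ∑ v ∈ m.support,
      (match v with
        | Sum.inl (α, i + 1) =>
            co (pd (Sum.inl (α, i)) f) (m - Finsupp.single (Sum.inl (α, i + 1)) 1)
        | _ => (0 : ℂ)) := rfl

lemma co_dx_eq_sum_finsum (f : DP N) (m : DVar N →₀ ℕ) :
    co (dx f) m = ∑ γ, ∑ᶠ n, co (pd (Sum.inl (γ, n)) f * uv γ (n + 1)) m := by
  set raise : Fin N × ℕ → DVar N := fun x => Sum.inl (x.1, x.2 + 1)
  have hraise : Function.Injective raise := by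
    rintro ⟨_, _⟩ ⟨_, _⟩ h
    simp_all [raise]
  set P := m.support.preimage raise hraise.injOn
  set G : Fin N × ℕ → ℂ := fun x => co (pd (Sum.inl x) f * uv x.1 (x.2 + 1)) m
  have hG : Function.support G ⊆ P := by
    intro x hx
    simp only [G, Function.mem_support, co_mul_uv, ne_eq, ite_eq_right_iff, not_forall] at hx
    simpa [P, raise] using hx.1
  calc co (dx f) m = ∑ x ∈ P, G x := by
        rw [co_dx, ← Finset.sum_preimage raise m.support hraise.injOn]
        · refine Finset.sum_congr rfl fun ⟨γ, n⟩ hx => ?_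
          rw [Finset.mem_preimage] at hx
          rw [show G (γ, n) = _ from co_mul_uv _ γ (n + 1) m, if_pos hx]
        · rintro (⟨β, _ | j⟩ | ⟨⟩) _ hv
          · rfl
          · exact absurd ⟨(β, j), rfl⟩ hv
          · rfl
    _ = ∑ᶠ x, G x := (finsum_eq_sum_of_support_subset G hG).symm
    _ = ∑ γ, ∑ᶠ n, G (γ, n) := by
        rw [finsum_curry G ((P.finite_toSet).subset hG), finsum_eq_sum_of_fintype]

lemma dx_sub (f g : DP N) : dx (f - g) = dx f - dx g := by
  ext m
  change co (dx (f - g)) m = co (dx f - dx g) m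
  rw [co_sub, co_dx, co_dx, co_dx, ← Finset.sum_sub_distrib]
  refine Finset.sum_congr rfl fun v _ => ?_
  rcases v with ⟨α, _ | i⟩ | ⟨⟩ <;> simp [pd_eq_pderiv, co_sub]

lemma dx_uv (γ : Fin N) (i : ℕ) : dx (uv γ i) = uv γ (i + 1) := by
  ext m
  change co (dx (uv γ i)) m = co (uv γ (i + 1)) m
  rw [co_dx_eq_sum_finsum, Finset.sum_eq_single γ, finsum_eq_single _ i]
  · rw [pd_uv, if_pos rfl, one_mul]
  · intro n hn
    simp [pd_uv, Ne.symm hn]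
  · intro β _ hβ
    simp [pd_uv, Ne.symm hβ]
  · simp

lemma pbK_eq_dx_of_translation (K : Fin N → Fin N → ℕ → DP N) {H : LF N}
    (htransl : ∀ α, Kap K α (fun μ => vdQ μ H) = uv α 1) (f : DP N) :
    pbK K f H = dx f := by
  have hiter (γ : Fin N) (n : ℕ) : dx^[n] (uv γ 1) = uv γ (n + 1) := by
    induction n with
    | zero => rfl
    | succ n ih => rw [Function.iterate_succ_apply', ih, dx_uv]
  ext m
  change co (pbK K f H) m = co (dx f) m
  simp only [pbK, co, ofCo, htransl, hiter]
  exact (co_dx_eq_sum_finsum f m).symm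

lemma pbK_sum_smul_uv_zero (K : Fin N → Fin N → ℕ → DP N) (c : Fin N → ℂ) (H : LF N) :
    pbK K (∑ μ, c μ • uv μ 0) H = ∑ μ, c μ • Kap K μ (fun ν => vdQ ν H) := by
  have hpd (γ : Fin N) (n : ℕ) : pd (Sum.inl (γ, n)) (∑ μ, c μ • uv μ 0) =
      if n = 0 then c γ • 1 else 0 := by
    rw [pd_eq_pderiv, map_sum]
    simp only [Derivation.map_smul, ← pd_eq_pderiv, pd_uv]
    rcases n with _ | n <;> simp
  ext m
  change ∑ γ, ∑ᶠ n, co (pd (Sum.inl (γ, n)) _ * dx^[n] (Kap K γ fun μ => vdQ μ H)) m = co _ m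
  simp only [hpd, co, map_sum]
  refine Finset.sum_congr rfl fun γ _ => ?_
  rw [finsum_eq_single _ 0 fun n hn => by simp [hn]]
  simp

def jetOrder : DVar N → ℕ
  | Sum.inl (_, i) => i
  | Sum.inr _ => 0

/- In `∂_x g`, the coefficient at `m` with one `u^α_i` replaced by `u^α_{i+1}` is
`m(u^α_i)` times that of `g` at `m`, plus coefficients of `g` at monomials of the same weight
that still contain `u^α_{i+1}`; so a downward induction on `i` (bounded by the weight) applies. -/
lemma co_eq_zero_of_dx_eq_zero_of_raised {g : DP N} (hg : dx g = 0) {m : DVar N →₀ ℕ}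
    {α : Fin N} {i : ℕ} (hm : m (Sum.inl (α, i)) ≠ 0)
    (hraised : ∀ m' : DVar N →₀ ℕ, m' (Sum.inl (α, i + 1)) ≠ 0 →
      m'.weight jetOrder = m.weight jetOrder → co g m' = 0) :
    co g m = 0 := by
  set top : DVar N := Sum.inl (α, i + 1)
  set M := m - Finsupp.single (Sum.inl (α, i)) 1 + Finsupp.single top 1 with hM
  have hMtop : M top ≠ 0 := by simp [hM]
  have hMw : M.weight jetOrder = m.weight jetOrder + 1 := by
    have := Finsupp.weight_sub_single_add (w := jetOrder) hm
    simp only [hM, map_add, Finsupp.weight_single, smul_eq_mul, top, jetOrder] at this ⊢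
    omega
  have hdx : co (dx g) M = 0 := by rw [hg, co_zero]
  rw [co_dx, Finset.sum_eq_single_of_mem top (Finsupp.mem_support_iff.mpr hMtop)] at hdx
  · change co (pd (Sum.inl (α, i)) g) (M - Finsupp.single top 1) = 0 at hdx
    rw [hM, add_tsub_cancel_right, co_pd, Finsupp.sub_add_single_one_cancel hm] at hdx
    exact (mul_eq_zero.mp hdx).resolve_right (Nat.cast_add_one_ne_zero _)
  rintro (⟨β, _ | j⟩ | ⟨⟩) hv hne
  · rfl
  · change co (pd (Sum.inl (β, j)) g) (M - Finsupp.single (Sum.inl (β, j + 1)) 1) = 0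
    have hvM : M (Sum.inl (β, j + 1)) ≠ 0 := Finsupp.mem_support_iff.mp hv
    rw [co_pd, hraised, zero_mul]
    · simp only [Finsupp.add_apply, Finsupp.tsub_apply, Finsupp.single_eq_of_ne' hne]
      omega
    · have := Finsupp.weight_sub_single_add (w := jetOrder) hvM
      simp only [map_add, Finsupp.weight_single, smul_eq_mul, jetOrder] at this ⊢
      omega
  · rfl

lemma co_eq_zero_of_dx_eq_zero {g : DP N} (hg : dx g = 0) {m : DVar N →₀ ℕ}
    {α : Fin N} {i : ℕ} (hm : m (Sum.inl (α, i)) ≠ 0) : co g m = 0 := by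
  obtain ⟨k, hk⟩ : ∃ k, m.weight jetOrder = i + k :=
    Nat.exists_eq_add_of_le (Finsupp.le_weight_of_ne_zero' jetOrder hm)
  induction k using Nat.strong_induction_on generalizing m i with
  | _ k ih =>
    refine co_eq_zero_of_dx_eq_zero_of_raised hg hm fun m' hm' hw => ?_
    have hle : i + 1 ≤ m'.weight jetOrder := Finsupp.le_weight_of_ne_zero' jetOrder hm'
    exact ih (k - 1) (by omega) hm' (by omega)

lemma eq_of_dx_eq {f g : DP N} (hdx : dx f = dx g) (hf : VanishAtU0 f) (hg : VanishAtU0 g) :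
    f = g := by
  rw [← sub_eq_zero]
  ext m
  change co (f - g) m = 0
  by_cases hu : ∃ α i, m (Sum.inl (α, i)) ≠ 0
  · obtain ⟨α, i, hm⟩ := hu
    exact co_eq_zero_of_dx_eq_zero (by rw [dx_sub, hdx, sub_self]) hm
  · push Not at hu
    have hm : m = Finsupp.single (Sum.inr ()) (m (Sum.inr ())) := by
      ext (⟨α, i⟩ | ⟨⟩) <;> simp [hu]
    rw [co_sub, hm, hf, hg, sub_self]

lemma dx_eq_sum_smul_Kap_of_tauSymm [NeZero N] (K : Fin N → Fin N → ℕ → DP N)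
    {H : Fin N → ℕ → LF N} {h : Fin N → ℕ → DP N} (c : Fin N → ℂ)
    (htransl : ∀ α, Kap K α (fun μ => vdQ μ (H 0 0)) = uv α 1)
    (htausym : ∀ α β p q, pbK K (h α p) (H β q) = pbK K (h β q) (H α p))
    (hnormal : h 0 0 = ∑ μ, c μ • uv μ 0) (α : Fin N) (p : ℕ) :
    dx (h α p) = ∑ μ, c μ • Kap K μ (fun ν => vdQ ν (H α p)) := by
  rw [← pbK_eq_dx_of_translation K htransl, htausym, hnormal, pbK_sum_smul_uv_zero]

end DP

open DP in
theorem statement6_general (N : ℕ) [NeZero N] (η : Matrix (Fin N) (Fin N) ℂ)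
    (K : Fin N → Fin N → ℕ → DP N) (H : Fin N → ℕ → LF N)
    (h : Fin N → ℕ → DP N)
    (hHier : IsHierarchy K H) (hTau : IsTauStructure K H h)
    (hNormal : ∀ α, h α 0 = ∑ μ : Fin N, η⁻¹ α μ • uv μ 0)
    (hVan : ∀ β q, VanishAtU0 (h β q)) :
    (∀ (α : Fin N) (p : ℕ),
      dx (h α p) = ∑ μ : Fin N, η⁻¹ 0 μ • Kap K μ (fun ν => vdQ ν (H α p))) ∧
    (∀ h₂ : Fin N → ℕ → DP N, IsTauStructure K H h₂ →
      (∀ α, h₂ α 0 = ∑ μ : Fin N, η⁻¹ α μ • uv μ 0) →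
      (∀ β q, VanishAtU0 (h₂ β q)) →
      ∀ β q, h₂ β q = h β q) := by
  have hdx (h' : Fin N → ℕ → DP N) (hTau' : IsTauStructure K H h')
      (hNormal' : ∀ α, h' α 0 = ∑ μ : Fin N, η⁻¹ α μ • uv μ 0) (α : Fin N) (p : ℕ) :
      dx (h' α p) = ∑ μ : Fin N, η⁻¹ 0 μ • Kap K μ (fun ν => vdQ ν (H α p)) :=
    dx_eq_sum_smul_Kap_of_tauSymm K _ hHier.transl hTau'.tausym (hNormal' 0) α p
  refine ⟨hdx h hTau hNormal, fun h₂ hTau₂ hNormal₂ hVan₂ β q => ?_⟩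
  exact eq_of_dx_eq (by rw [hdx h₂ hTau₂ hNormal₂, hdx h hTau hNormal]) (hVan₂ β q) (hVan β q)

open DP in
/-- uniqueness of a tau-structure in normal coordinates.
If the hamiltonian operator satisfies `K^{αβ} = η^{αβ}∂_x + O(ε)` and the
tau-structure `h` (with `h β q = h_{β,q−1}`) is in normal coordinates, i.e.
`h_{α,−1} = η_{αμ}u^μ` (lower indices denoting the inverse matrix), and is
normalized by `h_{β,q}|_{u^*_*=0} = 0`, then
`∂_x h_{α,p−1} = η_{1μ} K^{μν} δh̄_{α,p}/δu^ν` for all `p ≥ 0`, and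
consequently the tau-symmetric densities are uniquely determined by the
Hamiltonians and the operator `K`. -/
theorem statement6 (N : ℕ) [NeZero N] (η : Matrix (Fin N) (Fin N) ℂ)
    (hsym : η.IsSymm) (hnd : IsUnit η.det)
    (K : Fin N → Fin N → ℕ → DP N) (H : Fin N → ℕ → LF N)
    (h : Fin N → ℕ → DP N)
    (hHier : IsHierarchy K H) (hTau : IsTauStructure K H h)
    (hKeps : ∀ (α β : Fin N) (j : ℕ) (m : DVar N →₀ ℕ), m (Sum.inr ()) = 0 →
      co (K α β j) m = if j = 1 ∧ m = 0 then η α β else 0)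
    (hNormal : ∀ α, h α 0 = ∑ μ : Fin N, η⁻¹ α μ • uv μ 0)
    (hVan : ∀ β q, VanishAtU0 (h β q)) :
    (∀ (α : Fin N) (p : ℕ),
      dx (h α p) = ∑ μ : Fin N, η⁻¹ 0 μ • Kap K μ (fun ν => vdQ ν (H α p))) ∧
    (∀ h₂ : Fin N → ℕ → DP N, IsTauStructure K H h₂ →
      (∀ α, h₂ α 0 = ∑ μ : Fin N, η⁻¹ α μ • uv μ 0) →
      (∀ β q, VanishAtU0 (h₂ β q)) →
      ∀ β q, h₂ β q = h β q) :=
  statement6_general N η K H h hHier hTau hNormal hVan
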